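/- If Ω ∈ Λ³V* satisfies Ω = α + β = α' + β' where α, β, α', β' are decomposable 3-forms with α ∧ β ≠ 0 and α' ∧ β' ≠ 0, then the unordered pairs coincide: either (α', β') = (α, β) or (α', β') = (β, α). -/

import Mathlib

/-!
Write `α = ξ₁ ∧ ξ₂ ∧ ξ₃` and `β = η₁ ∧ η₂ ∧ η₃`. Since `α ∧ β ≠ 0` the six covectors are linearly
independent, so `v ↦ (ξ(v), η(v))` maps `V` onto `ℂ³ × ℂ³`, and in these coordinates `Ω` is the sum
of the determinants of the two halves. There one checks that the contraction `ι_v Ω` satisfies the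
Plücker relation exactly when `v ∈ ker ξ ∪ ker η`, so this union is determined by `Ω` alone. Neither
kernel contains the other, and a submodule contained in a union of two submodules lies in one of
them; hence `Ω` determines the pair of kernels. Finally `α' - α = β - β'` vanishes as soon as one
argument lies in `ker ξ` or in `ker η`, and these kernels span `V`, so `α' = α`.
-/

open scoped TensorProduct

noncomputable section

/-- The wedge product of alternating forms valued in a commutative algebra,
obtained from `AlternatingMap.domCoprod` (the sum over shuffles, so that the
wedge of covectors is given by a determinant). -/
def wedge {R A M : Type*} [CommRing R] [CommRing A] [Algebra R A]
    [AddCommGroup M] [Module R M] {m n : ℕ}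
    (α : AlternatingMap R M A (Fin m)) (β : AlternatingMap R M A (Fin n)) :
    AlternatingMap R M A (Fin (m + n)) :=
  (LinearMap.mul' R A).compAlternatingMap
    ((α.domCoprod β).domDomCongr finSumFinEquiv)

/-- A linear map regarded as an alternating 1-form. -/
def oneForm {R A M : Type*} [CommRing R] [CommRing A] [Algebra R A]
    [AddCommGroup M] [Module R M] (ξ : M →ₗ[R] A) : AlternatingMap R M A (Fin 1) :=
  AlternatingMap.ofSubsingleton R M A 0 ξ

/-- A 3-form is decomposable if it is the wedge of three covectors. -/
def IsDecomposable {R A M : Type*} [CommRing R] [CommRing A] [Algebra R A]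
    [AddCommGroup M] [Module R M] (α : AlternatingMap R M A (Fin 3)) : Prop :=
  ∃ ξ₁ ξ₂ ξ₃ : M →ₗ[R] A,
    α = wedge (oneForm ξ₁) (wedge (oneForm ξ₂) (oneForm ξ₃))

open LinearMap (ker)

section DetForm

variable {R M : Type*} [CommRing R] [AddCommGroup M] [Module R M]

def detForm {n : ℕ} (θ : Fin n → Module.Dual R M) : M [⋀^Fin n]→ₗ[R] R :=
  MultilinearMap.alternatization ((MultilinearMap.mkPiAlgebra R (Fin n) R).compLinearMap θ)

theorem detForm_apply {n : ℕ} (θ : Fin n → Module.Dual R M) (v : Fin n → M) :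
    detForm θ v = (Matrix.of fun i j => θ j (v i)).det := by
  rw [detForm, MultilinearMap.alternatization_apply, Matrix.det_apply]
  refine Finset.sum_congr rfl fun σ _ => ?_
  simp [MultilinearMap.domDomCongr_apply]

theorem wedge_detForm {m n : ℕ} (ξ : Fin m → Module.Dual R M) (η : Fin n → Module.Dual R M) :
    wedge (detForm ξ) (detForm η) = detForm (Fin.append ξ η) := by
  ext v
  rw [wedge, LinearMap.compAlternatingMap_apply, AlternatingMap.domDomCongr_apply, detForm,
    detForm, ← MultilinearMap.domCoprod_alternization, detForm,
    MultilinearMap.alternatization_apply, MultilinearMap.alternatization_apply, map_sum]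
  refine Fintype.sum_equiv (Equiv.permCongr finSumFinEquiv) _ _ fun σ => ?_
  rw [Equiv.Perm.sign_permCongr, Units.smul_def, Units.smul_def, map_zsmul]
  congr 1
  simp only [MultilinearMap.domDomCongr_apply, MultilinearMap.domCoprod_apply,
    LinearMap.mul'_apply, MultilinearMap.compLinearMap_apply, MultilinearMap.mkPiAlgebra_apply]
  rw [← Equiv.prod_comp finSumFinEquiv, Fintype.prod_sum_type]
  simp [Equiv.permCongr_apply]

theorem oneForm_eq_detForm (ξ : Module.Dual R M) : oneForm ξ = detForm ![ξ] := by
  ext v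
  simp [oneForm, detForm_apply, Matrix.det_unique]

theorem IsDecomposable.exists_eq_detForm {α : M [⋀^Fin 3]→ₗ[R] R} (h : IsDecomposable α) :
    ∃ θ : Fin 3 → Module.Dual R M, α = detForm θ := by
  obtain ⟨ξ₁, ξ₂, ξ₃, rfl⟩ := h
  refine ⟨![ξ₁, ξ₂, ξ₃], ?_⟩
  rw [oneForm_eq_detForm, oneForm_eq_detForm, oneForm_eq_detForm, wedge_detForm, wedge_detForm]
  congr 1
  funext i
  fin_cases i <;> rfl

theorem detForm_apply_eq_zero_of_mem_ker {n : ℕ} {θ : Fin n → Module.Dual R M} {v : Fin n → M}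
    {i : Fin n} (h : v i ∈ ker (LinearMap.pi θ)) : detForm θ v = 0 := by
  rw [detForm_apply]
  exact Matrix.det_eq_zero_of_row_eq_zero i fun j => congrFun h j

theorem linearIndependent_of_detForm_ne_zero [IsDomain R] {n : ℕ} {θ : Fin n → Module.Dual R M}
    (h : detForm θ ≠ 0) : LinearIndependent R θ := by
  by_contra hθ
  obtain ⟨g, hg, i, hi⟩ := Fintype.not_linearIndependent_iff.mp hθ
  refine h (AlternatingMap.ext fun v => ?_)
  rw [detForm_apply, AlternatingMap.zero_apply]
  refine Matrix.exists_mulVec_eq_zero_iff.mp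
    ⟨g, fun hg0 => hi (congrFun hg0 i), funext fun k => ?_⟩
  simpa [Matrix.mulVec, dotProduct, mul_comm] using LinearMap.congr_fun hg (v k)

end DetForm

section VectorSpace

variable {K V : Type*} [Field K] [AddCommGroup V] [Module K V]

theorem LinearIndependent.surjective_pi {ι : Type*} [Fintype ι] {θ : ι → Module.Dual K V}
    (h : LinearIndependent K θ) : Function.Surjective (LinearMap.pi θ) := by
  classical
  rw [← LinearMap.dualMap_injective_iff, injective_iff_map_eq_zero]
  intro c hc
  have hsum : ∑ j, c (Pi.single j 1) • θ j = 0 := by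
    ext v
    have := LinearMap.congr_fun hc v
    simp only [LinearMap.dualMap_apply, LinearMap.zero_apply] at this
    rw [LinearMap.zero_apply, ← this, pi_eq_sum_univ' (LinearMap.pi θ v), map_sum]
    simp [mul_comm]
  have hc0 := Fintype.linearIndependent_iff.mp h _ hsum
  exact LinearMap.pi_ext' fun j => LinearMap.ext_ring (hc0 j)

theorem surjective_prod_pi_of_wedge_detForm_ne_zero {m n : ℕ} {ξ : Fin m → Module.Dual K V}
    {η : Fin n → Module.Dual K V} (h : wedge (detForm ξ) (detForm η) ≠ 0) :
    Function.Surjective ((LinearMap.pi ξ).prod (LinearMap.pi η)) := by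
  rw [wedge_detForm] at h
  intro x
  obtain ⟨v, hv⟩ := (linearIndependent_of_detForm_ne_zero h).surjective_pi (Fin.append x.1 x.2)
  refine ⟨v, Prod.ext (funext fun i => ?_) (funext fun j => ?_)⟩
  · simpa using congrFun hv (Fin.castAdd n i)
  · simpa using congrFun hv (Fin.natAdd m j)

/-- Up to a factor `2`, the left-hand side is `(ι_v Ω ∧ ι_v Ω)(w₁, w₂, w₃, w₄)`: the Plücker
relation expressing that the contraction `ι_v Ω` is a 2-form of rank at most 2. -/
def PluckerAt (Ω : V [⋀^Fin 3]→ₗ[K] K) (v : V) : Prop :=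
  ∀ w₁ w₂ w₃ w₄ : V, Ω ![v, w₁, w₂] * Ω ![v, w₃, w₄] - Ω ![v, w₁, w₃] * Ω ![v, w₂, w₄]
    + Ω ![v, w₁, w₄] * Ω ![v, w₂, w₃] = 0

theorem det_plucker {R : Type*} [CommRing R] (a p₁ p₂ p₃ p₄ : Fin 3 → R) :
    (Matrix.of ![a, p₁, p₂]).det * (Matrix.of ![a, p₃, p₄]).det
      - (Matrix.of ![a, p₁, p₃]).det * (Matrix.of ![a, p₂, p₄]).det
      + (Matrix.of ![a, p₁, p₄]).det * (Matrix.of ![a, p₂, p₃]).det = 0 := by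
  simp [Matrix.det_fin_three]
  ring

theorem exists_det_ne_zero {a : Fin 3 → K} (ha : a ≠ 0) :
    ∃ p q : Fin 3 → K, (Matrix.of ![a, p, q]).det ≠ 0 := by
  obtain ⟨i, hi⟩ := Function.ne_iff.mp ha
  fin_cases i
  · exact ⟨Pi.single 1 1, Pi.single 2 1, by simpa [Matrix.det_fin_three] using hi⟩
  · exact ⟨Pi.single 2 1, Pi.single 0 1, by simpa [Matrix.det_fin_three] using hi⟩
  · exact ⟨Pi.single 0 1, Pi.single 1 1, by simpa [Matrix.det_fin_three] using hi⟩

theorem detForm_apply_fin_three (θ : Fin 3 → Module.Dual K V) (u₀ u₁ u₂ : V) :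
    detForm θ ![u₀, u₁, u₂] =
      (Matrix.of ![LinearMap.pi θ u₀, LinearMap.pi θ u₁, LinearMap.pi θ u₂]).det := by
  rw [detForm_apply]
  congr 1
  ext i j
  fin_cases i <;> rfl

theorem det_of_fin_three_eq_zero_of_zero_row {R : Type*} [CommRing R] {x y z : Fin 3 → R}
    (h : x = 0 ∨ y = 0 ∨ z = 0) : (Matrix.of ![x, y, z]).det = 0 := by
  rcases h with rfl | rfl | rfl
  exacts [Matrix.det_eq_zero_of_row_eq_zero 0 fun _ => rfl,
    Matrix.det_eq_zero_of_row_eq_zero 1 fun _ => rfl,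
    Matrix.det_eq_zero_of_row_eq_zero 2 fun _ => rfl]

theorem pluckerAt_detForm_add_iff {ξ η : Fin 3 → Module.Dual K V}
    (hsurj : Function.Surjective ((LinearMap.pi ξ).prod (LinearMap.pi η))) (v : V) :
    PluckerAt (detForm ξ + detForm η) v ↔
      v ∈ ker (LinearMap.pi ξ) ∨ v ∈ ker (LinearMap.pi η) := by
  simp only [PluckerAt, AlternatingMap.add_apply, detForm_apply_fin_three, LinearMap.mem_ker]
  constructor
  · intro h
    by_contra! hv
    obtain ⟨p, q, hpq⟩ := exists_det_ne_zero hv.1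
    obtain ⟨r, s, hrs⟩ := exists_det_ne_zero hv.2
    obtain ⟨w₁, hw₁⟩ := hsurj (p, 0)
    obtain ⟨w₂, hw₂⟩ := hsurj (q, 0)
    obtain ⟨w₃, hw₃⟩ := hsurj (0, r)
    obtain ⟨w₄, hw₄⟩ := hsurj (0, s)
    simp only [LinearMap.prod_apply, Function.prod, Prod.mk.injEq] at hw₁ hw₂ hw₃ hw₄
    have hw := h w₁ w₂ w₃ w₄
    simp only [hw₁, hw₂, hw₃, hw₄, det_of_fin_three_eq_zero_of_zero_row, true_or, or_true,
      add_zero, zero_add, mul_zero, sub_zero] at hw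
    exact mul_ne_zero hpq hrs hw
  · have hplucker := det_plucker (R := K)
    rintro (hv | hv) w₁ w₂ w₃ w₄
    · simpa [hv, det_of_fin_three_eq_zero_of_zero_row] using hplucker _ _ _ _ _
    · simpa [hv, det_of_fin_three_eq_zero_of_zero_row] using hplucker _ _ _ _ _

end VectorSpace

namespace LinearMap

variable {R M M₁ M₂ : Type*} [Ring R] [AddCommGroup M] [AddCommGroup M₁] [AddCommGroup M₂]
  [Module R M] [Module R M₁] [Module R M₂] {f : M →ₗ[R] M₁} {g : M →ₗ[R] M₂}

theorem ker_sup_ker_eq_top_of_surjective_prod (h : Function.Surjective (f.prod g)) :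
    ker f ⊔ ker g = ⊤ := by
  refine eq_top_iff.mpr fun v _ => ?_
  obtain ⟨w, hw⟩ := h (f v, 0)
  simp only [prod_apply, Function.prod, Prod.mk.injEq] at hw
  refine Submodule.mem_sup.mpr ⟨v - w, ?_, w, hw.2, sub_add_cancel v w⟩
  simp [hw.1]

theorem not_ker_le_ker_of_surjective_prod [Nontrivial M₁] [Nontrivial M₂]
    (h : Function.Surjective (f.prod g)) : ¬ ker f ≤ ker g ∧ ¬ ker g ≤ ker f := by
  obtain ⟨x₁, hx₁⟩ := exists_ne (0 : M₁)
  obtain ⟨x₂, hx₂⟩ := exists_ne (0 : M₂)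
  obtain ⟨w₁, hw₁⟩ := h (x₁, 0)
  obtain ⟨w₂, hw₂⟩ := h (0, x₂)
  simp only [prod_apply, Function.prod, Prod.mk.injEq] at hw₁ hw₂
  exact ⟨fun hle => hx₂ (hw₂.2 ▸ hle hw₂.1), fun hle => hx₁ (hw₁.1 ▸ hle hw₁.2)⟩

end LinearMap

namespace Submodule

variable {R M : Type*} [Ring R] [AddCommGroup M] [Module R M] {A B A' B' : Submodule R M}

theorem eq_and_eq_of_union_eq_of_le (hBA : ¬ B ≤ A) (hA'B' : ¬ A' ≤ B') (hB'A' : ¬ B' ≤ A')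
    (h : (A : Set M) ∪ B = (A' : Set M) ∪ B') (hle : A' ≤ A) : A' = A ∧ B' = B := by
  have hA : A ≤ A' ∨ A ≤ B' := AddSubgroupClass.subset_union.mp (h ▸ Set.subset_union_left)
  have hB : B ≤ A' ∨ B ≤ B' := AddSubgroupClass.subset_union.mp (h ▸ Set.subset_union_right)
  have hB' : B' ≤ A ∨ B' ≤ B := AddSubgroupClass.subset_union.mp (h ▸ Set.subset_union_right)
  have hAA' : A' = A := le_antisymm hle (hA.resolve_right fun hAB' => hA'B' (hle.trans hAB'))
  subst hAA'
  have hB'B : B' ≤ B := hB'.resolve_left hB'A'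
  exact ⟨rfl, le_antisymm hB'B (hB.resolve_left hBA)⟩

theorem eq_and_eq_or_eq_and_eq_of_union_eq (hAB : ¬ A ≤ B) (hBA : ¬ B ≤ A)
    (hA'B' : ¬ A' ≤ B') (hB'A' : ¬ B' ≤ A') (h : (A : Set M) ∪ B = (A' : Set M) ∪ B') :
    A' = A ∧ B' = B ∨ A' = B ∧ B' = A := by
  rcases AddSubgroupClass.subset_union.mp (h ▸ Set.subset_union_left : (A' : Set M) ⊆ A ∪ B)
    with hle | hle
  · exact .inl (eq_and_eq_of_union_eq_of_le hBA hA'B' hB'A' h hle)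
  · exact .inr (eq_and_eq_of_union_eq_of_le hAB hA'B' hB'A' (Set.union_comm _ _ ▸ h) hle)

end Submodule

theorem AlternatingMap.eq_zero_of_sup_eq_top {R M N ι : Type*} [Semiring R] [AddCommMonoid M]
    [Module R M] [AddCommMonoid N] [Module R N] [Fintype ι] [Nonempty ι]
    {f : M [⋀^ι]→ₗ[R] N} {A B : Submodule R M} (hAB : A ⊔ B = ⊤)
    (hA : ∀ v i, v i ∈ A → f v = 0) (hB : ∀ v i, v i ∈ B → f v = 0) : f = 0 := by
  classical
  ext v
  choose a ha b hb hab using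
    fun i => Submodule.mem_sup.mp (hAB ▸ Submodule.mem_top : v i ∈ A ⊔ B)
  obtain rfl : v = a + b := funext fun i => (hab i).symm
  rw [AlternatingMap.zero_apply, f.map_add_univ]
  refine Finset.sum_eq_zero fun s _ => ?_
  obtain rfl | ⟨i, hi⟩ := s.eq_empty_or_nonempty
  · exact hB _ (Classical.arbitrary ι) (by simpa using hb _)
  · exact hA _ i (by simpa [hi] using ha i)

theorem detForm_eq_and_eq_of_ker_eq {R M : Type*} [CommRing R] [AddCommGroup M] [Module R M]
    {n : ℕ} [NeZero n] {ξ η ξ' η' : Fin n → Module.Dual R M}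
    (hsup : ker (LinearMap.pi ξ) ⊔ ker (LinearMap.pi η) = ⊤)
    (hsum : detForm ξ + detForm η = detForm ξ' + detForm η')
    (hξ : ker (LinearMap.pi ξ') = ker (LinearMap.pi ξ))
    (hη : ker (LinearMap.pi η') = ker (LinearMap.pi η)) :
    detForm ξ' = detForm ξ ∧ detForm η' = detForm η := by
  have hdiff : detForm ξ' - detForm ξ = detForm η - detForm η' := by
    rw [sub_eq_sub_iff_add_eq_add, ← hsum, add_comm]
  have hξ' : detForm ξ' = detForm ξ := by
    rw [← sub_eq_zero]
    refine AlternatingMap.eq_zero_of_sup_eq_top hsup (fun v i hv => ?_) (fun v i hv => ?_)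
    · rw [AlternatingMap.sub_apply, detForm_apply_eq_zero_of_mem_ker hv,
        detForm_apply_eq_zero_of_mem_ker (hξ ▸ hv), sub_zero]
    · rw [hdiff, AlternatingMap.sub_apply, detForm_apply_eq_zero_of_mem_ker hv,
        detForm_apply_eq_zero_of_mem_ker (hη ▸ hv), sub_zero]
  refine ⟨hξ', ?_⟩
  rw [hξ'] at hsum
  exact (add_left_cancel hsum).symm

theorem stmt1_general (V : Type*) [AddCommGroup V] [Module ℂ V]
    (Ω α β α' β' : AlternatingMap ℂ V ℂ (Fin 3))
    (hα : IsDecomposable α) (hβ : IsDecomposable β)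
    (hα' : IsDecomposable α') (hβ' : IsDecomposable β')
    (hαβ : wedge α β ≠ 0) (hαβ' : wedge α' β' ≠ 0)
    (h : Ω = α + β) (h' : Ω = α' + β') :
    (α' = α ∧ β' = β) ∨ (α' = β ∧ β' = α) := by
  obtain ⟨ξ, rfl⟩ := hα.exists_eq_detForm
  obtain ⟨η, rfl⟩ := hβ.exists_eq_detForm
  obtain ⟨ξ', rfl⟩ := hα'.exists_eq_detForm
  obtain ⟨η', rfl⟩ := hβ'.exists_eq_detForm
  have hsurj := surjective_prod_pi_of_wedge_detForm_ne_zero hαβ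
  have hsurj' := surjective_prod_pi_of_wedge_detForm_ne_zero hαβ'
  have hsum : detForm ξ + detForm η = detForm ξ' + detForm η' := h.symm.trans h'
  have hker : (ker (LinearMap.pi ξ) : Set V) ∪ ker (LinearMap.pi η) =
      (ker (LinearMap.pi ξ') : Set V) ∪ ker (LinearMap.pi η') := by
    ext v
    simp only [Set.mem_union, SetLike.mem_coe, ← pluckerAt_detForm_add_iff hsurj,
      ← pluckerAt_detForm_add_iff hsurj', hsum]
  obtain ⟨hξη, hηξ⟩ := LinearMap.not_ker_le_ker_of_surjective_prod hsurj
  obtain ⟨hξη', hηξ'⟩ := LinearMap.not_ker_le_ker_of_surjective_prod hsurj'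
  have hsup := LinearMap.ker_sup_ker_eq_top_of_surjective_prod hsurj
  rcases Submodule.eq_and_eq_or_eq_and_eq_of_union_eq hξη hηξ hξη' hηξ' hker with
    ⟨hξ, hη⟩ | ⟨hξ, hη⟩
  · exact .inl (detForm_eq_and_eq_of_ker_eq hsup hsum hξ hη)
  · rw [sup_comm] at hsup
    rw [add_comm (detForm ξ)] at hsum
    exact .inr (detForm_eq_and_eq_of_ker_eq hsup hsum hξ hη)

/-- Uniqueness of the decomposition of a 3-form on a
6-dimensional complex vector space as a sum of two decomposable 3-forms
whose wedge is nonzero: the unordered pair `{α, β}` is unique. -/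
theorem stmt1 (V : Type*) [AddCommGroup V] [Module ℂ V] [FiniteDimensional ℂ V]
    (hdim : Module.finrank ℂ V = 6)
    (Ω α β α' β' : AlternatingMap ℂ V ℂ (Fin 3))
    (hα : IsDecomposable α) (hβ : IsDecomposable β)
    (hα' : IsDecomposable α') (hβ' : IsDecomposable β')
    (hαβ : wedge α β ≠ 0) (hαβ' : wedge α' β' ≠ 0)
    (h : Ω = α + β) (h' : Ω = α' + β') :
    (α' = α ∧ β' = β) ∨ (α' = β ∧ β' = α) :=
  stmt1_general V Ω α β α' β' hα hβ hα' hβ' hαβ hαβ' h h'
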